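/- Let V be a finite vertex set and E ⊆ V × V a finite arc set such that the directed graph (V,E) is strongly connected. Then there exists a potential function y : V → ℝ such that, defining the weight of each arc (u,v) ∈ E as w(u,v) = 1/(max{y(v) − y(u), 0} + 1), every subset S ⊆ V satisfies (1/2)·w(∂⁻S) ≤ w(∂⁺S) ≤ 2·w(∂⁻S). -/

import Mathlib

/-!
Let `f = arcPotential` be the concave primitive of `s ↦ 1 / (max s 0 + 1)`, so `f t = t` for
`t ≤ 0` and `f t = log (1 + t)` for `t ≥ 0`, and let `F y = ∑_{(u,v) ∈ E} f (y v - y u)`. Then `F`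
is invariant under adding a constant to `y`, and it attains its maximum: if the values of `y`
spread over an interval of length `m`, pigeonholing the `n = |V|` values into `n` slots of length
`m / n` and using strong connectivity produces an arc going down by more than `m / n`, so
`F y ≤ |E| log (1 + m) - m / n < 0 = F 0` once `m` is large. Differentiating `F` at a maximiser
in the direction of the indicator of `S` shows that the weights are exactly balanced on every
cut, which is stronger than the factor-`2` balance.
-/

open Finset

/-- The out-boundary `∂⁺S`: arcs `(u,v) ∈ E` with `u ∈ S` and `v ∉ S`. -/
def outBoundary [DecidableEq V] (E : Finset (V × V)) (S : Finset V) : Finset (V × V) :=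
  E.filter fun e => e.1 ∈ S ∧ e.2 ∉ S

/-- The in-boundary `∂⁻S`: arcs `(u,v) ∈ E` with `v ∈ S` and `u ∉ S`. -/
def inBoundary [DecidableEq V] (E : Finset (V × V)) (S : Finset V) : Finset (V × V) :=
  E.filter fun e => e.2 ∈ S ∧ e.1 ∉ S

/-- A directed graph (given by its arc set) is strongly connected if every ordered
pair of vertices is joined by a directed path. -/
def StronglyConnected (E : Finset (V × V)) : Prop :=
  ∀ u v : V, Relation.ReflTransGen (fun a b : V => (a, b) ∈ E) u v

open Filter Asymptotics Real

noncomputable section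

def arcWeight (s : ℝ) : ℝ := 1 / (max s 0 + 1)

lemma arcWeight_pos (s : ℝ) : 0 < arcWeight s := by
  unfold arcWeight; positivity

lemma continuous_arcWeight : Continuous arcWeight :=
  continuous_const.div (by fun_prop) fun s => (by positivity : max s 0 + 1 ≠ 0)

def arcPotential (t : ℝ) : ℝ := ∫ s in (0 : ℝ)..t, arcWeight s

lemma hasDerivAt_arcPotential (t : ℝ) : HasDerivAt arcPotential (arcWeight t) t :=
  intervalIntegral.integral_hasDerivAt_right (continuous_arcWeight.intervalIntegrable 0 t)
    (continuous_arcWeight.stronglyMeasurableAtFilter _ _) continuous_arcWeight.continuousAt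

lemma continuous_arcPotential : Continuous arcPotential :=
  continuous_iff_continuousAt.2 fun t => (hasDerivAt_arcPotential t).continuousAt

lemma strictMono_arcPotential : StrictMono arcPotential :=
  strictMono_of_deriv_pos fun t => (hasDerivAt_arcPotential t).deriv ▸ arcWeight_pos t

lemma arcPotential_of_nonpos {t : ℝ} (ht : t ≤ 0) : arcPotential t = t := by
  have h : ∀ s ∈ Set.uIcc t 0, arcWeight s = 1 := fun s hs => by
    rw [Set.uIcc_of_le ht] at hs
    simp [arcWeight, max_eq_right hs.2]
  rw [arcPotential, intervalIntegral.integral_symm, intervalIntegral.integral_congr h]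
  simp

lemma arcPotential_of_nonneg {t : ℝ} (ht : 0 ≤ t) : arcPotential t = log (1 + t) := by
  have h : ∀ s ∈ Set.uIcc 0 t, arcWeight s = (1 + s)⁻¹ := fun s hs => by
    rw [Set.uIcc_of_le ht] at hs
    rw [arcWeight, max_eq_left hs.1, one_div, add_comm]
  rw [arcPotential, intervalIntegral.integral_congr h, intervalIntegral.integral_comp_add_left
    (fun s => s⁻¹), integral_inv_of_pos (by norm_num) (by linarith)]
  simp

lemma arcPotential_le_log_one_add {s m : ℝ} (hsm : s ≤ m) (hm : 0 ≤ m) :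
    arcPotential s ≤ log (1 + m) :=
  arcPotential_of_nonneg hm ▸ strictMono_arcPotential.monotone hsm

lemma arcPotential_le_neg {s δ : ℝ} (hsδ : s ≤ -δ) (hδ : 0 ≤ δ) : arcPotential s ≤ -δ :=
  arcPotential_of_nonpos (neg_nonpos.2 hδ) ▸ strictMono_arcPotential.monotone hsδ

lemma eventually_mul_log_one_add_lt (c : ℝ) {n : ℝ} (hn : 0 < n) :
    ∀ᶠ m : ℝ in atTop, c * log (1 + m) < m / n := by
  have hlog : (fun m : ℝ => log (1 + m)) =o[atTop] id :=
    (isLittleO_log_id_atTop.comp_tendsto (tendsto_atTop_add_const_left atTop 1 tendsto_id)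
      ).trans_isBigO ((isLittleO_const_id_atTop 1).isBigO.add (isBigO_refl id atTop))
  have hpos : ∀ᶠ m : ℝ in atTop, 0 < ‖id m‖ := by
    filter_upwards [eventually_gt_atTop 0] with m hm
    simpa using hm.ne'
  filter_upwards [(hlog.const_mul_left (c * n)).eventuallyLT_norm_of_eventually_pos hpos,
    eventually_gt_atTop 0] with m hm hm0
  rw [lt_div_iff₀ hn, mul_right_comm]
  rw [id, Real.norm_of_nonneg hm0.le] at hm
  exact (le_abs_self _).trans_lt hm

lemma Relation.ReflTransGen.exists_crossing {r : V → V → Prop} {P : V → Prop} {u v : V}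
    (h : Relation.ReflTransGen r u v) (hu : ¬ P u) (hv : P v) : ∃ a b, r a b ∧ ¬ P a ∧ P b := by
  induction h with
  | refl => exact absurd hv hu
  | @tail b c _ hbc ih =>
    by_cases hb : P b
    · exact ih hb
    · exact ⟨b, c, hbc, hb, hv⟩

/-- Pigeonhole: the `n - 1` values `y v`, `v ≠ p`, miss one of the `n` slots above `y p`. -/
lemma exists_empty_slot [Fintype V] (y : V → ℝ) (p : V) {δ : ℝ} (hδ : 0 < δ) :
    ∃ k < Fintype.card V, ∀ v, y v ≤ y p + k * δ ∨ y p + (k + 1) * δ < y v := by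
  classical
  let slot : V → ℕ := fun v => ⌈(y v - y p) / δ⌉₊ - 1
  have hcard : #((univ.erase p).image slot) < #(range (Fintype.card V)) :=
    calc #((univ.erase p).image slot) ≤ #(univ.erase p) := card_image_le
      _ < #univ := card_erase_lt_of_mem (mem_univ p)
      _ = #(range (Fintype.card V)) := by rw [card_range, card_univ]
  obtain ⟨k, hk, hk_free⟩ := exists_mem_notMem_of_card_lt_card hcard
  refine ⟨k, mem_range.1 hk, fun v => or_iff_not_imp_left.2 fun hlow => ?_⟩
  by_contra hhigh
  rw [not_le] at hlow
  rw [not_lt] at hhigh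
  have hvp : v ≠ p := by
    rintro rfl
    nlinarith [(Nat.cast_nonneg k : (0 : ℝ) ≤ k)]
  have hslot : ⌈(y v - y p) / δ⌉₊ = k + 1 := by
    rw [Nat.ceil_eq_iff k.succ_ne_zero, lt_div_iff₀ hδ, div_le_iff₀ hδ]
    push_cast
    constructor <;> linarith
  exact hk_free (mem_image.2 ⟨v, mem_erase.2 ⟨hvp, mem_univ v⟩, by simp [slot, hslot]⟩)

lemma exists_arc_drop_gt_div_card [Fintype V] {E : Finset (V × V)} (hsc : StronglyConnected E)
    (y : V → ℝ) {p q : V} (hpq : y p < y q) :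
    ∃ a b, (a, b) ∈ E ∧ (y q - y p) / Fintype.card V < y a - y b := by
  have hn : (0 : ℝ) < Fintype.card V := Nat.cast_pos.2 (Fintype.card_pos_iff.2 ⟨p⟩)
  set δ := (y q - y p) / Fintype.card V
  have hδ : 0 < δ := div_pos (sub_pos.2 hpq) hn
  obtain ⟨k, hk, hslot⟩ := exists_empty_slot y p hδ
  have hq : ¬ y q ≤ y p + k * δ := by
    have hkn : (k : ℝ) + 1 ≤ Fintype.card V := by exact_mod_cast hk
    have : y q = y p + Fintype.card V * δ := by rw [mul_div_cancel₀ _ hn.ne']; ring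
    nlinarith
  have hp : y p ≤ y p + k * δ := le_add_of_nonneg_right (by positivity)
  obtain ⟨a, b, hab, ha, hb⟩ := (hsc q p).exists_crossing (P := fun v => y v ≤ y p + k * δ) hq hp
  refine ⟨a, b, hab, ?_⟩
  have := (hslot a).resolve_left ha
  linarith

def totalPotential (E : Finset (V × V)) (y : V → ℝ) : ℝ :=
  ∑ e ∈ E, arcPotential (y e.2 - y e.1)

lemma continuous_totalPotential (E : Finset (V × V)) : Continuous (totalPotential E) :=
  continuous_finsetSum _ fun e _ =>
    continuous_arcPotential.comp ((continuous_apply e.2).sub (continuous_apply e.1))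

lemma totalPotential_zero (E : Finset (V × V)) : totalPotential E 0 = 0 := by
  simp [totalPotential, arcPotential]

lemma totalPotential_sub_const (E : Finset (V × V)) (y : V → ℝ) (c : ℝ) :
    totalPotential E (fun v => y v - c) = totalPotential E y := by
  simp [totalPotential]

lemma totalPotential_le_of_spread [Fintype V] {E : Finset (V × V)} (hsc : StronglyConnected E)
    {y : V → ℝ} {p q : V} (hpq : y p < y q) (hspread : ∀ u v, y v - y u ≤ y q - y p) :
    totalPotential E y ≤ #E * log (1 + (y q - y p)) - (y q - y p) / Fintype.card V := by
  classical
  obtain ⟨a, b, hab, hdrop⟩ := exists_arc_drop_gt_div_card hsc y hpq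
  have hm : 0 ≤ y q - y p := (sub_pos.2 hpq).le
  have hlog : 0 ≤ log (1 + (y q - y p)) := log_nonneg (by linarith)
  have hrest : ∑ e ∈ E.erase (a, b), arcPotential (y e.2 - y e.1) ≤ #E * log (1 + (y q - y p)) :=
    calc ∑ e ∈ E.erase (a, b), arcPotential (y e.2 - y e.1)
        ≤ #(E.erase (a, b)) • log (1 + (y q - y p)) :=
          sum_le_card_nsmul _ _ _ fun e _ => arcPotential_le_log_one_add (hspread _ _) hm
      _ ≤ #E * log (1 + (y q - y p)) := by
          rw [nsmul_eq_mul]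
          gcongr
          exact erase_subset _ _
  have hdown : arcPotential (y b - y a) ≤ -((y q - y p) / Fintype.card V) :=
    arcPotential_le_neg (by linarith) (by positivity)
  rw [totalPotential, ← add_sum_erase E _ hab]
  linarith

lemma exists_forall_totalPotential_le [Fintype V] {E : Finset (V × V)}
    (hsc : StronglyConnected E) : ∃ y : V → ℝ, ∀ z, totalPotential E z ≤ totalPotential E y := by
  rcases isEmpty_or_nonempty V with hV | hV
  · exact ⟨0, fun z => by rw [Subsingleton.elim z 0]⟩
  have hn : (0 : ℝ) < Fintype.card V := Nat.cast_pos.2 Fintype.card_pos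
  obtain ⟨B, hB⟩ := eventually_atTop.1
    ((eventually_ge_atTop 0).and (eventually_mul_log_one_add_lt #E hn))
  have h0 : (0 : V → ℝ) ∈ Set.Icc 0 fun _ => B := ⟨le_rfl, fun _ => (hB B le_rfl).1⟩
  obtain ⟨y, -, hymax⟩ := isCompact_Icc.exists_isMaxOn ⟨0, h0⟩
    (continuous_totalPotential E).continuousOn
  refine ⟨y, fun z => ?_⟩
  obtain ⟨p, hp⟩ := Finite.exists_min z
  obtain ⟨q, hq⟩ := Finite.exists_max z
  by_cases hspread : z q - z p ≤ B
  · rw [← totalPotential_sub_const E z (z p)]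
    exact hymax ⟨fun v => sub_nonneg.2 (hp v), fun v => by linarith [hq v]⟩
  · have hpq : z p < z q := by linarith [(hB B le_rfl).1]
    have hneg := (hB _ (not_le.1 hspread).le).2
    calc totalPotential E z
        ≤ #E * log (1 + (z q - z p)) - (z q - z p) / Fintype.card V :=
          totalPotential_le_of_spread hsc hpq fun u v => by linarith [hp u, hq v]
      _ ≤ totalPotential E 0 := by rw [totalPotential_zero]; linarith
      _ ≤ totalPotential E y := hymax h0

lemma hasDerivAt_totalPotential_add_smul (E : Finset (V × V)) (y d : V → ℝ) :
    HasDerivAt (fun t : ℝ => totalPotential E (y + t • d))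
      (∑ e ∈ E, arcWeight (y e.2 - y e.1) * (d e.2 - d e.1)) 0 := by
  refine HasDerivAt.fun_sum fun e _ => ?_
  have hline : HasDerivAt (fun t : ℝ => (y + t • d) e.2 - (y + t • d) e.1) (d e.2 - d e.1) 0 := by
    simpa [mul_sub, add_sub_add_comm] using
      ((hasDerivAt_id (0 : ℝ)).mul_const (d e.2 - d e.1)).const_add (y e.2 - y e.1)
  exact (hasDerivAt_arcPotential _).comp_of_eq 0 hline (by simp)

lemma sum_inBoundary_sub_sum_outBoundary [DecidableEq V] (E : Finset (V × V)) (S : Finset V)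
    (g : V × V → ℝ) :
    ∑ e ∈ inBoundary E S, g e - ∑ e ∈ outBoundary E S, g e =
      ∑ e ∈ E, g e * ((if e.2 ∈ S then 1 else 0) - (if e.1 ∈ S then 1 else 0)) := by
  rw [inBoundary, outBoundary, sum_filter, sum_filter, ← sum_sub_distrib]
  refine sum_congr rfl fun e _ => ?_
  by_cases h2 : e.2 ∈ S <;> by_cases h1 : e.1 ∈ S <;> simp [h1, h2]

lemma sum_inBoundary_eq_sum_outBoundary [DecidableEq V] {E : Finset (V × V)} {y : V → ℝ}
    (hmax : ∀ z, totalPotential E z ≤ totalPotential E y) (S : Finset V) :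
    ∑ e ∈ inBoundary E S, arcWeight (y e.2 - y e.1) =
      ∑ e ∈ outBoundary E S, arcWeight (y e.2 - y e.1) := by
  rw [← sub_eq_zero, sum_inBoundary_sub_sum_outBoundary]
  refine IsLocalMax.hasDerivAt_eq_zero (Eventually.of_forall fun t => ?_)
    (hasDerivAt_totalPotential_add_smul E y fun v => if v ∈ S then 1 else 0)
  simpa using hmax _

end

/-- **Existence of balancing weights.** For every strongly connected finite directed
graph there is a potential function `y : V → ℝ` such that, with arc weights
`w(u,v) = 1/(max{y(v) - y(u), 0} + 1)`, every cut satisfies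
`(1/2)·w(∂⁻S) ≤ w(∂⁺S) ≤ 2·w(∂⁻S)`. -/
theorem exists_balancing_potential [Fintype V] [DecidableEq V]
    (E : Finset (V × V)) (hsc : StronglyConnected E) :
    ∃ y : V → ℝ, ∀ S : Finset V,
      (1 / 2) * (∑ e ∈ inBoundary E S, 1 / (max (y e.2 - y e.1) 0 + 1))
          ≤ ∑ e ∈ outBoundary E S, 1 / (max (y e.2 - y e.1) 0 + 1) ∧
      ∑ e ∈ outBoundary E S, 1 / (max (y e.2 - y e.1) 0 + 1)
          ≤ 2 * ∑ e ∈ inBoundary E S, 1 / (max (y e.2 - y e.1) 0 + 1) := by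
  obtain ⟨y, hmax⟩ := exists_forall_totalPotential_le hsc
  refine ⟨y, fun S => ?_⟩
  have hbal := sum_inBoundary_eq_sum_outBoundary hmax S
  have hnonneg : 0 ≤ ∑ e ∈ outBoundary E S, arcWeight (y e.2 - y e.1) :=
    sum_nonneg fun e _ => (arcWeight_pos _).le
  change (1 / 2) * ∑ e ∈ inBoundary E S, arcWeight (y e.2 - y e.1)
      ≤ ∑ e ∈ outBoundary E S, arcWeight (y e.2 - y e.1) ∧
    ∑ e ∈ outBoundary E S, arcWeight (y e.2 - y e.1)
      ≤ 2 * ∑ e ∈ inBoundary E S, arcWeight (y e.2 - y e.1)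
  constructor <;> linarith
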